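/- With d, Q, w_I as above, max_{x∈Q} d(x) − min_{x∈Q} d(x) ≤ M_Q ln|Σ|, where M_Q := max_{x∈Q} ‖x‖₁. -/

import Mathlib

open scoped BigOperators

/-- A treeplex: information sets with finite nonempty action sets and a
parent function forming a rooted tree (witnessed by a depth function). -/
structure Treeplex where
  Info : Type
  Act : Info → Type
  finInfo : Fintype Info
  decInfo : DecidableEq Info
  finAct : ∀ i, Fintype (Act i)
  decAct : ∀ i, DecidableEq (Act i)
  neAct : ∀ i, Nonempty (Act i)
  parent : Info → Option (Σ i : Info, Act i)
  depth : Info → ℕ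
  parent_depth : ∀ i' i a, parent i' = some ⟨i, a⟩ → depth i < depth i'

instance (T : Treeplex) : Fintype T.Info := T.finInfo
instance (T : Treeplex) : DecidableEq T.Info := T.decInfo
instance (T : Treeplex) (i : T.Info) : Fintype (T.Act i) := T.finAct i
instance (T : Treeplex) (i : T.Info) : DecidableEq (T.Act i) := T.decAct i
instance (T : Treeplex) (i : T.Info) : Nonempty (T.Act i) := T.neAct i

namespace Treeplex

/-- The index set Σ = {∅} ∪ {(I,a)}. -/
abbrev Idx (T : Treeplex) := Option (Σ i : T.Info, T.Act i)

/-- The strategy set (sequence-form polytope). -/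
def Q (T : Treeplex) : Set (T.Idx → ℝ) :=
  {x | (∀ j, 0 ≤ x j) ∧ x none = 1 ∧
    ∀ i : T.Info, x (T.parent i) = ∑ a : T.Act i, x (some ⟨i, a⟩)}

/-- Sum of `w` over the children information sets of the sequence `(i, a)`. -/
def childSum (T : Treeplex) (w : T.Info → ℝ) (i : T.Info) (a : T.Act i) : ℝ :=
  ∑ i' : T.Info, if T.parent i' = some ⟨i, a⟩ then w i' else 0

/-- `w` satisfies the recursion `w_I = 1 + max_{a} ∑_{I' : p(I')=(I,a)} w_{I'}`. -/
def IsWeight (T : Treeplex) (w : T.Info → ℝ) : Prop :=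
  ∀ i : T.Info,
    w i = 1 + Finset.univ.sup' Finset.univ_nonempty (fun a : T.Act i => T.childSum w i a)

/-- The dilated entropy prox-function
`d(x) = x_∅ ln x_∅ + ∑_{I,a} (w_I − ∑_{p(I')=(I,a)} w_{I'}) x_{I,a} ln x_{I,a}`. -/
noncomputable def prox (T : Treeplex) (w : T.Info → ℝ) (x : T.Idx → ℝ) : ℝ :=
  x none * Real.log (x none) +
    ∑ i : T.Info, ∑ a : T.Act i,
      (w i - T.childSum w i a) * (x (some ⟨i, a⟩) * Real.log (x (some ⟨i, a⟩)))

end Treeplex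

/-!
Write `c_{I,a} = w_I − ∑_{p(I')=(I,a)} w_{I'}` and `S = ∑_{p(I)=∅} w_I`. The weight recursion
gives `1 ≤ c_{I,a} ≤ w_I ≤ S`, and on `Q` the sum `∑ c_{I,a} x_{I,a}` telescopes to `S`.
Hence `d = −∑ c_{I,a} negMulLog x_{I,a} ≤ 0` on `Q`, while the tangent line of `negMulLog` at
`1 / N`, with `N = |Σ|`, gives `−d ≤ (∑ c_{I,a}) / N − S + S ln N ≤ S ln N`. Finally, the pure
strategy choosing at each `I` an action with `c_{I,a} = 1` has `ℓ₁`-norm `1 + S`, so `S ≤ M_Q`.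
-/

/-- The tangent line of the concave function `negMulLog` at `1 / t`. -/
theorem Real.mul_negMulLog_le_tangent {t x : ℝ} (ht : 0 < t) (hx : 0 ≤ x) :
    t * Real.negMulLog x ≤ 1 - t * x + t * x * Real.log t := by
  have h := Real.negMulLog_le_one_sub_self (mul_nonneg ht.le hx)
  rw [Real.negMulLog_mul, Real.negMulLog] at h
  linarith

namespace Treeplex

variable {T : Treeplex}

theorem induction_on_parent {P : T.Info → Prop}
    (h : ∀ i, (∀ i' a, T.parent i = some ⟨i', a⟩ → P i') → P i) (i : T.Info) : P i :=
  (measure T.depth).wf.induction i fun i ih =>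
    h i fun i' a hp => ih i' (T.parent_depth i i' a hp)

theorem induction_on_children {P : T.Info → Prop}
    (h : ∀ i, (∀ i' a, T.parent i' = some ⟨i, a⟩ → P i') → P i) (i : T.Info) : P i :=
  (measure fun i => Finset.univ.sup T.depth - T.depth i).wf.induction i fun i ih =>
    h i fun i' a hp => ih i' <| by
      have := T.parent_depth i' i a hp
      have := Finset.le_sup (f := T.depth) (Finset.mem_univ i')
      show Finset.univ.sup T.depth - T.depth i' < Finset.univ.sup T.depth - T.depth i
      omega

theorem induction_idx {P : T.Idx → Prop} (root : P none)
    (step : ∀ i a, P (T.parent i) → P (some ⟨i, a⟩)) : ∀ j, P j := by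
  suffices h : ∀ i a, P (some ⟨i, a⟩) by
    rintro (_ | ⟨i, a⟩)
    exacts [root, h i a]
  refine induction_on_parent fun i ih a => step i a ?_
  cases hp : T.parent i with
  | none => exact root
  | some s => exact ih s.1 s.2 hp s.2

theorem le_one_of_mem_Q {x : T.Idx → ℝ} (hx : x ∈ T.Q) : ∀ j, x j ≤ 1 := by
  obtain ⟨hnonneg, hroot, hflow⟩ := hx
  refine induction_idx hroot.le fun i a hle => le_trans ?_ hle
  rw [hflow i]
  exact Finset.single_le_sum (f := fun a => x (some ⟨i, a⟩)) (fun _ _ => hnonneg _)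
    (Finset.mem_univ a)

def rank : T.Idx → ℕ
  | none => 0
  | some s => T.depth s.1 + 1

theorem rank_parent_lt (i : T.Info) : T.rank (T.parent i) < T.depth i + 1 := by
  cases hp : T.parent i with
  | none => simp [rank]
  | some s => simpa [rank] using T.parent_depth i s.1 s.2 hp

noncomputable def pureStrategy (c : ∀ i, T.Act i) : T.Idx → ℝ
  | none => 1
  | some ⟨i, a⟩ => if a = c i then pureStrategy c (T.parent i) else 0
termination_by j => T.rank j
decreasing_by exact rank_parent_lt i

theorem pureStrategy_mem_Q (c : ∀ i, T.Act i) : T.pureStrategy c ∈ T.Q := by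
  refine ⟨induction_idx (by simp [pureStrategy]) fun i a h => ?_, by simp [pureStrategy],
    fun i => ?_⟩
  · rw [pureStrategy]
    split_ifs
    exacts [h, le_rfl]
  · simp [pureStrategy]

section Weights

variable {w : T.Info → ℝ}

/-- The coefficient `w_I − ∑_{p(I')=(I,a)} w_{I'}` of `x_{I,a} ln x_{I,a}` in `prox`. -/
def coeff (w : T.Info → ℝ) (s : Σ i, T.Act i) : ℝ :=
  w s.1 - T.childSum w s.1 s.2

/-- `∑_{p(I)=∅} w_I`, so that `M_Q = 1 + rootWeight w`. -/
def rootWeight (w : T.Info → ℝ) : ℝ :=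
  ∑ i ∈ Finset.univ.filter (fun i => T.parent i = none), w i

theorem childSum_le_sub_one (hw : T.IsWeight w) (i : T.Info) (a : T.Act i) :
    T.childSum w i a ≤ w i - 1 := by
  rw [hw i, add_sub_cancel_left]
  exact Finset.le_sup' (fun a => T.childSum w i a) (Finset.mem_univ a)

theorem one_le_weight (hw : T.IsWeight w) : ∀ i, 1 ≤ w i := by
  refine induction_on_children fun i ih => ?_
  obtain ⟨a⟩ := T.neAct i
  have : 0 ≤ T.childSum w i a :=
    Finset.sum_nonneg fun i' _ => by
      split_ifs with hp
      exacts [zero_le_one.trans (ih i' a hp), le_rfl]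
  linarith [childSum_le_sub_one hw i a]

theorem childSum_nonneg (hw : T.IsWeight w) (i : T.Info) (a : T.Act i) :
    0 ≤ T.childSum w i a :=
  Finset.sum_nonneg fun i' _ => by
    split_ifs
    exacts [zero_le_one.trans (one_le_weight hw i'), le_rfl]

theorem weight_le_childSum (hw : T.IsWeight w) {i i' : T.Info} {a : T.Act i}
    (hp : T.parent i' = some ⟨i, a⟩) : w i' ≤ T.childSum w i a := by
  have := Finset.single_le_sum
    (f := fun i'' => if T.parent i'' = some ⟨i, a⟩ then w i'' else 0)
    (fun j _ => by
      split_ifs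
      exacts [zero_le_one.trans (one_le_weight hw j), le_rfl])
    (Finset.mem_univ i')
  simpa [childSum, hp] using this

theorem weight_le_rootWeight (hw : T.IsWeight w) : ∀ i, w i ≤ T.rootWeight w := by
  refine induction_on_parent fun i ih => ?_
  cases hp : T.parent i with
  | none =>
    exact Finset.single_le_sum (fun j _ => zero_le_one.trans (one_le_weight hw j))
      (by simp [hp])
  | some s =>
    calc w i ≤ T.childSum w s.1 s.2 := weight_le_childSum hw hp
      _ ≤ w s.1 - 1 := childSum_le_sub_one hw s.1 s.2
      _ ≤ T.rootWeight w := by linarith [ih s.1 s.2 hp]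

theorem rootWeight_nonneg (hw : T.IsWeight w) : 0 ≤ T.rootWeight w :=
  Finset.sum_nonneg fun i _ => zero_le_one.trans (one_le_weight hw i)

theorem one_le_coeff (hw : T.IsWeight w) (s : Σ i, T.Act i) : 1 ≤ T.coeff w s := by
  rw [coeff]
  linarith [childSum_le_sub_one hw s.1 s.2]

theorem coeff_le_rootWeight (hw : T.IsWeight w) (s : Σ i, T.Act i) :
    T.coeff w s ≤ T.rootWeight w := by
  rw [coeff]
  linarith [childSum_nonneg hw s.1 s.2, weight_le_rootWeight hw s.1]

theorem exists_coeff_eq_one (hw : T.IsWeight w) (i : T.Info) : ∃ a, T.coeff w ⟨i, a⟩ = 1 := by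
  obtain ⟨a, -, ha⟩ :=
    Finset.exists_mem_eq_sup' Finset.univ_nonempty (fun a => T.childSum w i a)
  refine ⟨a, ?_⟩
  rw [coeff, hw i, ha]
  ring

theorem sum_ite_parent_eq_some (f : T.Idx → ℝ) (i : T.Info) :
    ∑ s, (if T.parent i = some s then f (some s) else 0)
      = f (T.parent i) - if T.parent i = none then f none else 0 := by
  cases T.parent i <;> simp

variable (w) in
/-- Each `w_{I'}` enters `∑ coeff · x` once with `+x_{p(I')}` (from `I'` itself) and once with
`−x_{p(I')}` (from its parent sequence), except at roots, where only `x_∅ = 1` survives. -/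
theorem sum_coeff_mul_eq_rootWeight {x : T.Idx → ℝ} (hx : x ∈ T.Q) :
    ∑ s, T.coeff w s * x (some s) = T.rootWeight w := by
  obtain ⟨-, hroot, hflow⟩ := hx
  have hown : ∑ s : Σ i, T.Act i, w s.1 * x (some s) = ∑ i, w i * x (T.parent i) := by
    simp only [Fintype.sum_sigma, ← Finset.mul_sum, hflow]
  have hchildren : ∑ s, T.childSum w s.1 s.2 * x (some s)
      = ∑ i, w i * (x (T.parent i) - if T.parent i = none then 1 else 0) := by
    simp only [childSum, Finset.sum_mul, ite_mul, zero_mul]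
    rw [Finset.sum_comm]
    refine Finset.sum_congr rfl fun i _ => ?_
    rw [← hroot, ← sum_ite_parent_eq_some, Finset.mul_sum]
    exact Finset.sum_congr rfl fun s _ => by split_ifs <;> simp
  simp only [coeff, sub_mul, Finset.sum_sub_distrib, hown, hchildren, rootWeight,
    Finset.sum_filter, mul_sub, mul_ite, mul_one, mul_zero]
  ring

theorem exists_mem_Q_sum_abs_eq (hw : T.IsWeight w) :
    ∃ x ∈ T.Q, ∑ j, |x j| = 1 + T.rootWeight w := by
  choose c hc using exists_coeff_eq_one hw
  have hQ := pureStrategy_mem_Q c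
  refine ⟨_, hQ, ?_⟩
  rw [Fintype.sum_option, ← sum_coeff_mul_eq_rootWeight w hQ]
  congr 1
  · simp [pureStrategy]
  refine Finset.sum_congr rfl fun ⟨i, a⟩ _ => ?_
  rw [abs_of_nonneg (hQ.1 _), pureStrategy]
  split_ifs with ha
  · rw [ha, hc, one_mul]
  · simp

theorem prox_eq_neg_sum_coeff_mul_negMulLog {x : T.Idx → ℝ} (hx : x none = 1) :
    T.prox w x = -∑ s, T.coeff w s * Real.negMulLog (x (some s)) := by
  simp [prox, hx, coeff, Fintype.sum_sigma, Real.negMulLog]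

theorem prox_nonpos (hw : T.IsWeight w) {x : T.Idx → ℝ} (hx : x ∈ T.Q) : T.prox w x ≤ 0 := by
  rw [prox_eq_neg_sum_coeff_mul_negMulLog hx.2.1, neg_nonpos]
  exact Finset.sum_nonneg fun s _ => mul_nonneg (zero_le_one.trans (one_le_coeff hw s))
    (Real.negMulLog_nonneg (hx.1 _) (le_one_of_mem_Q hx _))

theorem neg_prox_le (hw : T.IsWeight w) {x : T.Idx → ℝ} (hx : x ∈ T.Q) :
    -T.prox w x ≤ T.rootWeight w * Real.log (Fintype.card T.Idx) := by
  set N : ℝ := (Fintype.card T.Idx : ℝ)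
  set S := T.rootWeight w
  have hN : 0 < N := by positivity
  have hcoeff : ∑ s, T.coeff w s ≤ N * S := calc
    ∑ s, T.coeff w s ≤ ∑ _s : Σ i, T.Act i, S :=
      Finset.sum_le_sum fun s _ => coeff_le_rootWeight hw s
    _ ≤ N * S := by
      rw [Finset.sum_const, nsmul_eq_mul, Finset.card_univ]
      gcongr
      · exact rootWeight_nonneg hw
      · simp [N, Fintype.card_option]
  suffices N * ∑ s, T.coeff w s * Real.negMulLog (x (some s)) ≤ N * (S * Real.log N) by
    rw [prox_eq_neg_sum_coeff_mul_negMulLog hx.2.1, neg_neg]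
    exact le_of_mul_le_mul_left this hN
  calc N * ∑ s, T.coeff w s * Real.negMulLog (x (some s))
      ≤ ∑ s, T.coeff w s * (1 - N * x (some s) + N * x (some s) * Real.log N) := by
        rw [Finset.mul_sum]
        refine Finset.sum_le_sum fun s _ => ?_
        rw [mul_left_comm]
        exact mul_le_mul_of_nonneg_left (Real.mul_negMulLog_le_tangent hN (hx.1 _))
          (zero_le_one.trans (one_le_coeff hw s))
    _ = ∑ s, T.coeff w s - N * ∑ s, T.coeff w s * x (some s)
          + N * Real.log N * ∑ s, T.coeff w s * x (some s) := by
        simp only [Finset.mul_sum, ← Finset.sum_sub_distrib, ← Finset.sum_add_distrib]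
        exact Finset.sum_congr rfl fun s _ => by ring
    _ ≤ N * (S * Real.log N) := by
        rw [sum_coeff_mul_eq_rootWeight w hx]
        linarith

end Weights

end Treeplex

/-- The range of the dilated entropy prox-function on the strategy set is bounded:
`max_{x∈Q} d(x) − min_{x∈Q} d(x) ≤ M_Q ln |Σ|`. -/
theorem stmt9 (T : Treeplex) (w : T.Info → ℝ) (hw : T.IsWeight w)
    (MQ : ℝ) (hMQ : IsGreatest ((fun x => ∑ j, |x j|) '' T.Q) MQ)
    (Dmax Dmin : ℝ)
    (hDmax : IsGreatest (T.prox w '' T.Q) Dmax)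
    (hDmin : IsLeast (T.prox w '' T.Q) Dmin) :
    Dmax - Dmin ≤ MQ * Real.log (Fintype.card T.Idx) := by
  obtain ⟨xmax, hxmax, rfl⟩ := hDmax.1
  obtain ⟨xmin, hxmin, rfl⟩ := hDmin.1
  obtain ⟨x, hx, hnorm⟩ := Treeplex.exists_mem_Q_sum_abs_eq hw
  have hS : T.rootWeight w ≤ MQ := by linarith [hMQ.2 ⟨x, hx, hnorm⟩]
  calc T.prox w xmax - T.prox w xmin ≤ T.rootWeight w * Real.log (Fintype.card T.Idx) := by
        linarith [Treeplex.prox_nonpos hw hxmax, Treeplex.neg_prox_le hw hxmin]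
    _ ≤ MQ * Real.log (Fintype.card T.Idx) := by gcongr
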